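/- Let $s > 0$ and $X > e$. Then $\int_X^\infty \frac{dY}{Y^{s}\,(\log Y)\,(Y^2 - X^2)^{1/2}} = \frac{\sqrt{\pi}\,\Gamma(s/2)}{2\,\Gamma((s+1)/2)}\,\frac{1}{X^{s}\log X}\left(1 + O\left(\frac{1}{\log X}\right)\right)$ as $X \to \infty$. -/

import Mathlib

/-!
Substituting `Y = X u` turns the integral into `X ^ (-s) * ∫_1^∞ K(u) / log (X u) du` with
`K(u) = u ^ (-s) / √(u ² - 1)`. Since `log (X u) = log X + log u`, replacing `1 / log (X u)` by
`1 / log X` costs at most `K(u) log u / (log X)²` pointwise, and `K · log` is integrable because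
`log u ≤ u ^ (s/2) / (s/2)`. The main term `∫_1^∞ K` becomes the Beta integral `B(s/2, 1/2) / 2`
under `u = t ^ (-1/2)`, and `Γ(1/2) = √π`.
-/

open MeasureTheory Real Set

lemma ofReal_rpow_mul_one_sub_rpow {a b t : ℝ} (ht : t ∈ Ioo 0 1) :
    ((t ^ (a - 1) * (1 - t) ^ (b - 1) : ℝ) : ℂ) =
      (t : ℂ) ^ ((a : ℂ) - 1) * (1 - (t : ℂ)) ^ ((b : ℂ) - 1) := by
  rw [Complex.ofReal_mul, Complex.ofReal_cpow ht.1.le,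
    Complex.ofReal_cpow (sub_nonneg.2 ht.2.le)]
  push_cast
  rfl

lemma integrableOn_rpow_mul_one_sub_rpow {a b : ℝ} (ha : 0 < a) (hb : 0 < b) :
    IntegrableOn (fun t : ℝ => t ^ (a - 1) * (1 - t) ^ (b - 1)) (Ioo 0 1) := by
  have h := Complex.betaIntegral_convergent (u := a) (v := b) (by simpa) (by simpa)
  rw [intervalIntegrable_iff_integrableOn_Ioo_of_le zero_le_one] at h
  refine IntegrableOn.congr_fun h.re (fun t ht => ?_) measurableSet_Ioo
  rw [← ofReal_rpow_mul_one_sub_rpow ht]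
  exact Complex.ofReal_re _

lemma integral_rpow_mul_one_sub_rpow {a b : ℝ} (ha : 0 < a) (hb : 0 < b) :
    ∫ t in Ioo (0 : ℝ) 1, t ^ (a - 1) * (1 - t) ^ (b - 1) =
      Gamma a * Gamma b / Gamma (a + b) := by
  have h := Complex.betaIntegral_eq_Gamma_mul_div (u := a) (v := b) (by simpa) (by simpa)
  rw [Complex.betaIntegral, intervalIntegral.integral_of_le zero_le_one,
    integral_Ioc_eq_integral_Ioo,
    ← setIntegral_congr_fun measurableSet_Ioo (fun t ht => ofReal_rpow_mul_one_sub_rpow ht),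
    integral_complex_ofReal, ← Complex.ofReal_add, Complex.Gamma_ofReal, Complex.Gamma_ofReal,
    Complex.Gamma_ofReal] at h
  exact_mod_cast h

lemma image_rpow_Ioo_zero_one {p : ℝ} (hp : p < 0) :
    (fun t : ℝ => t ^ p) '' Ioo 0 1 = Ioi 1 := by
  ext y
  constructor
  · rintro ⟨t, ht, rfl⟩
    exact one_lt_rpow_of_pos_of_lt_one_of_neg ht.1 ht.2 hp
  · intro hy
    have hy0 : 0 < y := one_pos.trans hy
    exact ⟨y ^ p⁻¹, ⟨rpow_pos_of_pos hy0 _, rpow_lt_one_of_one_lt_of_neg hy (inv_lt_zero.2 hp)⟩,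
      rpow_inv_rpow hy0.le hp.ne⟩

section ChangeOfVariables

variable {E : Type*} [NormedAddCommGroup E] [NormedSpace ℝ E] {p : ℝ}

lemma hasDerivWithinAt_rpow_Ioo_zero_one (p : ℝ) :
    ∀ t ∈ Ioo (0 : ℝ) 1, HasDerivWithinAt (fun t : ℝ => t ^ p) (p * t ^ (p - 1)) (Ioo 0 1) t :=
  fun _ ht => (hasDerivAt_rpow_const (Or.inl ht.1.ne')).hasDerivWithinAt

lemma injOn_rpow_Ioo_zero_one (hp : p ≠ 0) : InjOn (fun t : ℝ => t ^ p) (Ioo 0 1) :=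
  (rpow_left_injOn hp).mono fun _ ht => ht.1.le

lemma integral_Ioi_one_eq_integral_Ioo_comp_rpow (hp : p < 0) (g : ℝ → E) :
    ∫ u in Ioi 1, g u = ∫ t in Ioo 0 1, |p * t ^ (p - 1)| • g (t ^ p) := by
  rw [← image_rpow_Ioo_zero_one hp]
  exact integral_image_eq_integral_abs_deriv_smul measurableSet_Ioo
    (hasDerivWithinAt_rpow_Ioo_zero_one p) (injOn_rpow_Ioo_zero_one hp.ne) g

lemma integrableOn_Ioi_one_iff_comp_rpow (hp : p < 0) (g : ℝ → E) :
    IntegrableOn g (Ioi 1) ↔ IntegrableOn (fun t => |p * t ^ (p - 1)| • g (t ^ p)) (Ioo 0 1) := by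
  rw [← image_rpow_Ioo_zero_one hp]
  exact integrableOn_image_iff_integrableOn_abs_deriv_smul measurableSet_Ioo
    (hasDerivWithinAt_rpow_Ioo_zero_one p) (injOn_rpow_Ioo_zero_one hp.ne) g

end ChangeOfVariables

lemma abs_deriv_smul_rpow_neg_div_sqrt {s t : ℝ} (ht : t ∈ Ioo 0 1) :
    |(-2⁻¹) * t ^ (-2⁻¹ - 1 : ℝ)| • ((t ^ (-2⁻¹ : ℝ)) ^ (-s) / √((t ^ (-2⁻¹ : ℝ)) ^ 2 - 1)) =
      2⁻¹ * (t ^ (s / 2 - 1) * (1 - t) ^ (1 / 2 - 1 : ℝ)) := by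
  obtain ⟨ht0, ht1⟩ := ht
  have h1t : 0 < 1 - t := sub_pos.2 ht1
  have hsq : (t ^ (-2⁻¹ : ℝ)) ^ 2 - 1 = (1 - t) / t := by
    rw [← rpow_natCast, ← rpow_mul ht0.le]
    norm_num [rpow_neg_one]
    field_simp
  rw [hsq, sqrt_div' _ ht0.le, sqrt_eq_rpow, sqrt_eq_rpow, smul_eq_mul,
    abs_of_nonpos (mul_nonpos_of_nonpos_of_nonneg (by norm_num) (rpow_nonneg ht0.le _)),
    ← rpow_mul ht0.le, show (1 / 2 - 1 : ℝ) = -(1 / 2) by norm_num, rpow_neg h1t.le]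
  have : t ^ (s / 2 - 1) = t ^ (-2⁻¹ - 1 : ℝ) * t ^ (-2⁻¹ * -s) * t ^ (1 / 2 : ℝ) := by
    rw [← rpow_add ht0, ← rpow_add ht0]; ring_nf
  rw [this]
  have : 0 < (1 - t) ^ (1 / 2 : ℝ) := rpow_pos_of_pos h1t _
  field_simp

lemma integrableOn_Ioi_one_rpow_neg_div_sqrt {s : ℝ} (hs : 0 < s) :
    IntegrableOn (fun u : ℝ => u ^ (-s) / √(u ^ 2 - 1)) (Ioi 1) := by
  rw [integrableOn_Ioi_one_iff_comp_rpow (by norm_num : (-2⁻¹ : ℝ) < 0)]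
  refine IntegrableOn.congr_fun ((integrableOn_rpow_mul_one_sub_rpow (half_pos hs)
    one_half_pos).const_mul 2⁻¹) (fun t ht => ?_) measurableSet_Ioo
  exact (abs_deriv_smul_rpow_neg_div_sqrt ht).symm

lemma integral_Ioi_one_rpow_neg_div_sqrt {s : ℝ} (hs : 0 < s) :
    ∫ u in Ioi (1 : ℝ), u ^ (-s) / √(u ^ 2 - 1) =
      √π * Gamma (s / 2) / (2 * Gamma ((s + 1) / 2)) := by
  rw [integral_Ioi_one_eq_integral_Ioo_comp_rpow (by norm_num : (-2⁻¹ : ℝ) < 0),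
    setIntegral_congr_fun measurableSet_Ioo fun t ht => abs_deriv_smul_rpow_neg_div_sqrt ht,
    integral_const_mul, integral_rpow_mul_one_sub_rpow (half_pos hs) one_half_pos,
    Gamma_one_half_eq, add_div]
  ring

lemma rpow_neg_div_sqrt_nonneg (s : ℝ) {u : ℝ} (hu : 0 ≤ u) : 0 ≤ u ^ (-s) / √(u ^ 2 - 1) :=
  div_nonneg (rpow_nonneg hu _) (sqrt_nonneg _)

lemma integrableOn_Ioi_one_rpow_neg_div_sqrt_mul_log {s : ℝ} (hs : 0 < s) :
    IntegrableOn (fun u : ℝ => u ^ (-s) / √(u ^ 2 - 1) * log u) (Ioi 1) := by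
  refine Integrable.mono' ((integrableOn_Ioi_one_rpow_neg_div_sqrt (half_pos hs)).const_mul
    (s / 2)⁻¹) (by fun_prop) ((ae_restrict_iff' measurableSet_Ioi).2 (ae_of_all _ fun u hu => ?_))
  have hu0 : 0 < u := one_pos.trans hu
  have hlog : 0 ≤ log u := log_nonneg (le_of_lt hu)
  rw [norm_of_nonneg (mul_nonneg (rpow_neg_div_sqrt_nonneg s hu0.le) hlog)]
  calc u ^ (-s) / √(u ^ 2 - 1) * log u
      ≤ u ^ (-s) / √(u ^ 2 - 1) * (u ^ (s / 2) / (s / 2)) := by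
        gcongr
        exact log_le_rpow_div hu0.le (half_pos hs)
    _ = (s / 2)⁻¹ * (u ^ (-(s / 2)) / √(u ^ 2 - 1)) := by
        rw [rpow_neg hu0.le, rpow_neg hu0.le, show s = s / 2 + s / 2 by ring, rpow_add hu0]
        field_simp
        ring_nf

lemma integral_Ioi_eq_rpow_neg_mul_integral_Ioi_one {s X : ℝ} (hX : 0 < X) :
    ∫ Y in Ioi X, 1 / (Y ^ s * log Y * √(Y ^ 2 - X ^ 2)) =
      X ^ (-s) * ∫ u in Ioi (1 : ℝ), u ^ (-s) / √(u ^ 2 - 1) / log (X * u) := by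
  have h := integral_comp_mul_left_Ioi (fun Y => 1 / (Y ^ s * log Y * √(Y ^ 2 - X ^ 2))) 1 hX
  rw [mul_one, smul_eq_mul, eq_inv_mul_iff_mul_eq₀ hX.ne'] at h
  rw [← h, ← integral_const_mul, ← integral_const_mul]
  refine setIntegral_congr_fun measurableSet_Ioi fun u hu => ?_
  have hu0 : 0 < u := one_pos.trans hu
  have hsqrt : √((X * u) ^ 2 - X ^ 2) = X * √(u ^ 2 - 1) := by
    rw [show (X * u) ^ 2 - X ^ 2 = X ^ 2 * (u ^ 2 - 1) by ring, sqrt_mul (sq_nonneg X),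
      sqrt_sq hX.le]
  rw [mul_rpow hX.le hu0.le, hsqrt, rpow_neg hX.le, rpow_neg hu0.le]
  field_simp

lemma abs_integral_div_log_mul_sub_le {K : ℝ → ℝ} (hK : ∀ u ∈ Ioi (1 : ℝ), 0 ≤ K u)
    (hKi : IntegrableOn K (Ioi 1)) (hKl : IntegrableOn (fun u => K u * log u) (Ioi 1))
    {X : ℝ} (hX : 1 < X) :
    |(∫ u in Ioi (1 : ℝ), K u / log (X * u)) - (∫ u in Ioi (1 : ℝ), K u) / log X| ≤
      (∫ u in Ioi (1 : ℝ), K u * log u) / log X ^ 2 := by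
  have hlogX : 0 < log X := log_pos hX
  have hdiff : ∀ u ∈ Ioi (1 : ℝ),
      K u / log X - K u / log (X * u) = K u * log u / (log X * (log X + log u)) := by
    intro u hu
    rw [log_mul (by positivity) (one_pos.trans hu).ne']
    have hlogu := log_nonneg (le_of_lt hu)
    field_simp
    ring
  have hbound : ∀ u ∈ Ioi (1 : ℝ),
      ‖K u / log (X * u) - K u / log X‖ ≤ K u * log u / log X ^ 2 := by
    intro u hu
    have hlogu := log_nonneg (le_of_lt hu)
    have hKu := hK u hu
    rw [norm_sub_rev, hdiff u hu, norm_of_nonneg (by positivity), sq]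
    gcongr
    linarith
  have hint : IntegrableOn (fun u => K u / log (X * u)) (Ioi 1) := by
    refine Integrable.mono' (hKi.div_const (log X)) ?_
      ((ae_restrict_iff' measurableSet_Ioi).2 (ae_of_all _ fun u hu => ?_))
    · simp only [div_eq_mul_inv]
      exact hKi.aestronglyMeasurable.mul
        (by fun_prop : Measurable fun u => (log (X * u))⁻¹).aestronglyMeasurable
    · have hlogu := log_nonneg (le_of_lt hu)
      rw [log_mul (by positivity) (one_pos.trans hu).ne',
        norm_of_nonneg (div_nonneg (hK u hu) (by positivity))]
      gcongr
      · exact hK u hu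
      · linarith
  rw [← integral_div, ← integral_sub hint (hKi.div_const _), ← integral_div]
  exact norm_integral_le_of_norm_le (hKl.div_const _)
    ((ae_restrict_iff' measurableSet_Ioi).2 (ae_of_all _ hbound))

theorem stmt5 (s : ℝ) (hs : 0 < s) :
    ∃ C X₀ : ℝ, 0 < C ∧ Real.exp 1 < X₀ ∧ ∀ X : ℝ, X₀ ≤ X →
      |(∫ Y in Set.Ioi X, 1 / (Y ^ s * Real.log Y * Real.sqrt (Y ^ 2 - X ^ 2))) -
          Real.sqrt Real.pi * Real.Gamma (s / 2) / (2 * Real.Gamma ((s + 1) / 2)) *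
            (1 / (X ^ s * Real.log X))| ≤
        C / (X ^ s * (Real.log X) ^ 2) := by
  set C₀ := ∫ u in Ioi (1 : ℝ), u ^ (-s) / √(u ^ 2 - 1) * log u
  have hC₀ : 0 ≤ C₀ := setIntegral_nonneg measurableSet_Ioi fun u hu =>
    mul_nonneg (rpow_neg_div_sqrt_nonneg s (zero_le_one.trans (le_of_lt hu)))
      (log_nonneg (le_of_lt hu))
  refine ⟨C₀ + 1, exp 2, by linarith, exp_lt_exp.2 one_lt_two, fun X hX₀ => ?_⟩
  have hX : 1 < X := (one_lt_exp_iff.2 two_pos).trans_le hX₀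
  have hXs : 0 < X ^ s := rpow_pos_of_pos (one_pos.trans hX) s
  have hmain := abs_integral_div_log_mul_sub_le
    (fun u hu => rpow_neg_div_sqrt_nonneg s (zero_le_one.trans (le_of_lt hu)))
    (integrableOn_Ioi_one_rpow_neg_div_sqrt hs)
    (integrableOn_Ioi_one_rpow_neg_div_sqrt_mul_log hs) hX
  rw [integral_Ioi_one_rpow_neg_div_sqrt hs] at hmain
  rw [integral_Ioi_eq_rpow_neg_mul_integral_Ioi_one (one_pos.trans hX),
    rpow_neg (one_pos.trans hX).le]
  set I := ∫ u in Ioi (1 : ℝ), u ^ (-s) / √(u ^ 2 - 1) / log (X * u)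
  set A := √π * Gamma (s / 2) / (2 * Gamma ((s + 1) / 2))
  calc |(X ^ s)⁻¹ * I - A * (1 / (X ^ s * log X))| = (X ^ s)⁻¹ * |I - A / log X| := by
        rw [show (X ^ s)⁻¹ * I - A * (1 / (X ^ s * log X)) = (X ^ s)⁻¹ * (I - A / log X) by ring,
          abs_mul, abs_of_pos (inv_pos.2 hXs)]
    _ ≤ (X ^ s)⁻¹ * (C₀ / log X ^ 2) := by gcongr
    _ = C₀ / (X ^ s * log X ^ 2) := by field_simp
    _ ≤ (C₀ + 1) / (X ^ s * log X ^ 2) := by gcongr; linarith
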